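/- Optimality of partially procrastinating policies for the finite-battery two-way channel: for every hard-feasible policy (p_{k,i}, δ_{k,i}) with α_1, α_2 ∈ [0,1], there exist sequences γ_{k,i} ≥ 0 and ε_{k,i} ≥ 0 such that the policy (p_{k,i}, δ'_{k,i}) with δ'_{k,i} = γ_{k,i} + ε_{k,i} is hard-feasible and partially procrastinating, i.e., for all k = 1,2, j ≠ k, and i = 1,…,N: p_{k,i} − α_j γ_{j,i} ≥ 0, γ_{1,i}·γ_{2,i} = 0, and ε_{k,i}·(E_k^max − S'_{k,i}) = 0, where S'_{k,i} = Σ_{n=1}^{i}(E_{k,n} − p_{k,n} + α_j δ'_{j,n} − δ'_{k,n}) is the battery state under the new policy. Since the transmit powers are unchanged, the supremum of the sum-throughput over partially procrastinating hard-feasible policies equals that over all hard-feasible policies. -/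

import Mathlib

/-!
Fix the transmit powers; the throughput depends on nothing else. The procrastinating transfers
are chosen greedily, slot by slot: a user transfers energy (`γ`) only to cover the other user's
shortfall in that slot, and exactly that much; afterwards energy is transferred (`ε`) only when a
battery would overflow, and then the least amount that brings both batteries within capacity
(a two-dimensional linear complementarity problem). By induction, the cumulative transfers of
the greedy policy never exceed those of the given feasible policy: the given levels are the
greedy ones plus the effect of the transfers still outstanding, so in every slot some
nonnegative transfers keep the greedy batteries within bounds, and the greedy transfers, being
the least such (this is where `α₁ α₂ ≤ 1` enters), do so as well.
-/

/-- Sum-throughputs of hard-feasible policies of the finite-battery two-way channel. -/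
def twcHardThroughputs (N : ℕ) (E1 E2 : ℕ → ℝ) (Em1 Em2 h1 h2 s1 s2 a1 a2 : ℝ) : Set ℝ :=
  {t : ℝ | ∃ p1 p2 d1 d2 : ℕ → ℝ,
    (∀ i < N, 0 ≤ p1 i ∧ 0 ≤ p2 i ∧ 0 ≤ d1 i ∧ 0 ≤ d2 i) ∧
    (∀ i < N,
      (0 ≤ ∑ n ∈ Finset.range (i+1), (E1 n - p1 n + a2 * d2 n - d1 n) ∧
        ∑ n ∈ Finset.range (i+1), (E1 n - p1 n + a2 * d2 n - d1 n) ≤ Em1) ∧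
      (0 ≤ ∑ n ∈ Finset.range (i+1), (E2 n - p2 n + a1 * d1 n - d2 n) ∧
        ∑ n ∈ Finset.range (i+1), (E2 n - p2 n + a1 * d1 n - d2 n) ≤ Em2)) ∧
    t = ∑ i ∈ Finset.range N,
      (1/2 * Real.log (1 + h1 * p1 i / s2) + 1/2 * Real.log (1 + h2 * p2 i / s1))}

/-- Sum-throughputs of hard-feasible policies that are partially procrastinating. -/
def twcPartProcThroughputs (N : ℕ) (E1 E2 : ℕ → ℝ) (Em1 Em2 h1 h2 s1 s2 a1 a2 : ℝ) : Set ℝ :=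
  {t : ℝ | ∃ p1 p2 g1 g2 e1 e2 : ℕ → ℝ,
    (∀ i < N, 0 ≤ p1 i ∧ 0 ≤ p2 i ∧ 0 ≤ g1 i ∧ 0 ≤ g2 i ∧ 0 ≤ e1 i ∧ 0 ≤ e2 i) ∧
    (∀ i < N,
      (0 ≤ ∑ n ∈ Finset.range (i+1),
            (E1 n - p1 n + a2 * (g2 n + e2 n) - (g1 n + e1 n)) ∧
        ∑ n ∈ Finset.range (i+1),
            (E1 n - p1 n + a2 * (g2 n + e2 n) - (g1 n + e1 n)) ≤ Em1) ∧
      (0 ≤ ∑ n ∈ Finset.range (i+1),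
            (E2 n - p2 n + a1 * (g1 n + e1 n) - (g2 n + e2 n)) ∧
        ∑ n ∈ Finset.range (i+1),
            (E2 n - p2 n + a1 * (g1 n + e1 n) - (g2 n + e2 n)) ≤ Em2)) ∧
    (∀ i < N,
      0 ≤ p1 i - a2 * g2 i ∧ 0 ≤ p2 i - a1 * g1 i ∧
      g1 i * g2 i = 0 ∧
      e1 i * (Em1 - ∑ n ∈ Finset.range (i+1),
        (E1 n - p1 n + a2 * (g2 n + e2 n) - (g1 n + e1 n))) = 0 ∧
      e2 i * (Em2 - ∑ n ∈ Finset.range (i+1),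
        (E2 n - p2 n + a1 * (g1 n + e1 n) - (g2 n + e2 n))) = 0) ∧
    t = ∑ i ∈ Finset.range N,
      (1/2 * Real.log (1 + h1 * p1 i / s2) + 1/2 * Real.log (1 + h2 * p2 i / s1))}

open Finset

namespace TwoWayChannel

def transferGain (a1 a2 : ℝ) : ℝ × ℝ →ₗ[ℝ] ℝ × ℝ where
  toFun d := (a2 * d.2 - d.1, a1 * d.1 - d.2)
  map_add' x y := by ext <;> simp only [Prod.fst_add, Prod.snd_add] <;> ring
  map_smul' c x := by
    ext <;> simp only [Prod.smul_fst, Prod.smul_snd, smul_eq_mul, RingHom.id_apply] <;> ring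

variable {a1 a2 : ℝ}

@[simp]
lemma transferGain_fst (d : ℝ × ℝ) : (transferGain a1 a2 d).1 = a2 * d.2 - d.1 := rfl

@[simp]
lemma transferGain_snd (d : ℝ × ℝ) : (transferGain a1 a2 d).2 = a1 * d.1 - d.2 := rfl

lemma le_of_transferGain_le_transferGain (ha1 : 0 ≤ a1) (ha2 : 0 ≤ a2) (ha12 : a1 * a2 < 1)
    {e w : ℝ × ℝ} (h : transferGain a1 a2 w ≤ transferGain a1 a2 e) : e ≤ w := by
  obtain ⟨h1, h2⟩ := Prod.le_def.1 h
  simp only [transferGain_fst, transferGain_snd] at h1 h2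
  constructor <;> nlinarith [mul_le_mul_of_nonneg_left h2 ha2, mul_le_mul_of_nonneg_left h1 ha1]

lemma mul_div_le_max_zero {a : ℝ} (ha : 0 ≤ a) (x : ℝ) : a * (x / a) ≤ max x 0 := by
  rcases ha.eq_or_lt with rfl | ha
  · simp
  · rw [mul_div_cancel₀ x ha.ne']
    exact le_max_left x 0

/-- `u` are the battery levels of a slot after harvesting and transmitting, before transfers. -/
noncomputable def deficitTransfer (a1 a2 : ℝ) (u : ℝ × ℝ) : ℝ × ℝ :=
  if u.1 < 0 then (0, -u.1 / a2) else if u.2 < 0 then (-u.2 / a1, 0) else 0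

lemma deficitTransfer_nonneg (ha1 : 0 ≤ a1) (ha2 : 0 ≤ a2) (u : ℝ × ℝ) :
    0 ≤ deficitTransfer a1 a2 u := by
  unfold deficitTransfer
  split_ifs with h1 h2
  · exact Prod.mk_le_mk.2 ⟨le_rfl, div_nonneg (by linarith) ha2⟩
  · exact Prod.mk_le_mk.2 ⟨div_nonneg (by linarith) ha1, le_rfl⟩
  · exact le_rfl

lemma deficitTransfer_fst_mul_snd (u : ℝ × ℝ) :
    (deficitTransfer a1 a2 u).1 * (deficitTransfer a1 a2 u).2 = 0 := by
  unfold deficitTransfer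
  split_ifs <;> simp

lemma mul_deficitTransfer_snd_le (ha2 : 0 ≤ a2) (u : ℝ × ℝ) :
    a2 * (deficitTransfer a1 a2 u).2 ≤ max (-u.1) 0 := by
  unfold deficitTransfer
  split_ifs
  · exact mul_div_le_max_zero ha2 _
  all_goals simp

lemma mul_deficitTransfer_fst_le (ha1 : 0 ≤ a1) (u : ℝ × ℝ) :
    a1 * (deficitTransfer a1 a2 u).1 ≤ max (-u.2) 0 := by
  unfold deficitTransfer
  split_ifs
  · simp
  · exact mul_div_le_max_zero ha1 _
  · simp

lemma deficitTransfer_le_and_add_nonneg (ha1 : 0 ≤ a1) (ha2 : 0 ≤ a2) (ha12 : a1 * a2 ≤ 1)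
    {u w : ℝ × ℝ} (hw : 0 ≤ w) (hu : 0 ≤ u + transferGain a1 a2 w) :
    deficitTransfer a1 a2 u ≤ w ∧ 0 ≤ u + transferGain a1 a2 (deficitTransfer a1 a2 u) := by
  obtain ⟨u1, u2⟩ := u
  obtain ⟨w1, w2⟩ := w
  obtain ⟨hw1, hw2⟩ := Prod.mk_le_mk.1 hw
  obtain ⟨hu1, hu2⟩ := Prod.mk_le_mk.1 hu
  simp only [transferGain_fst, transferGain_snd] at hu1 hu2
  unfold deficitTransfer
  split_ifs with h1 h2 <;>
    simp only [Prod.le_def, Prod.fst_zero, Prod.snd_zero, transferGain_fst, transferGain_snd,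
      Prod.fst_add, Prod.snd_add]
  · have ha2' : 0 < a2 := ha2.lt_of_ne (by rintro rfl; linarith)
    have hg : a2 * (-u1 / a2) = -u1 := mul_div_cancel₀ _ ha2'.ne'
    refine ⟨⟨hw1, (div_le_iff₀' ha2').2 (by linarith)⟩, by linarith, ?_⟩
    rw [← mul_nonneg_iff_of_pos_left ha2']
    nlinarith
  · have ha1' : 0 < a1 := ha1.lt_of_ne (by rintro rfl; linarith)
    have hg : a1 * (-u2 / a1) = -u2 := mul_div_cancel₀ _ ha1'.ne'
    refine ⟨⟨(div_le_iff₀' ha1').2 (by linarith), hw2⟩, ?_, by linarith⟩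
    rw [← mul_nonneg_iff_of_pos_left ha1']
    nlinarith
  · refine ⟨⟨hw1, hw2⟩, ?_, ?_⟩ <;> linarith

noncomputable def fillTransfer (a1 a2 : ℝ) (r : ℝ × ℝ) : ℝ × ℝ :=
  ((r.1 + a2 * r.2) / (1 - a1 * a2), (r.2 + a1 * r.1) / (1 - a1 * a2))

lemma add_transferGain_fillTransfer (ha12 : a1 * a2 < 1) (r : ℝ × ℝ) :
    r + transferGain a1 a2 (fillTransfer a1 a2 r) = 0 := by
  have hD : 1 - a1 * a2 ≠ 0 := (sub_pos.2 ha12).ne'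
  ext <;>
    simp only [fillTransfer, Prod.fst_add, Prod.snd_add, transferGain_fst, transferGain_snd,
      Prod.fst_zero, Prod.snd_zero] <;>
    rw [mul_div_assoc', div_sub_div_same, add_div' _ _ _ hD, div_eq_zero_iff] <;>
    exact Or.inl (by ring)

lemma fillTransfer_nonneg (ha2 : 0 ≤ a2) (ha12 : a1 * a2 < 1) {r : ℝ × ℝ}
    (h0 : r.1 ≤ 0 → 0 < r.2) (h1 : 0 < r.1 → 0 < r.2 + a1 * r.1)
    (h2 : 0 < r.2 → 0 < r.1 + a2 * r.2) :
    0 ≤ fillTransfer a1 a2 r := by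
  have hD : 0 ≤ 1 - a1 * a2 := (sub_pos.2 ha12).le
  refine Prod.mk_le_mk.2 ⟨div_nonneg ?_ hD, div_nonneg ?_ hD⟩ <;>
    rcases le_or_gt r.1 0 with hr1 | hr1
  · exact (h2 (h0 hr1)).le
  · nlinarith [h1 hr1]
  · nlinarith [h2 (h0 hr1), h0 hr1]
  · exact (h1 hr1).le

/-- For an excess `r` over the capacities, the least `e ≥ 0` with `r + transferGain a1 a2 e ≤ 0`;
in the last case both batteries end full. -/
noncomputable def overflowTransfer (a1 a2 : ℝ) (r : ℝ × ℝ) : ℝ × ℝ :=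
  if r ≤ 0 then 0
  else if 0 < r.1 ∧ r.2 + a1 * r.1 ≤ 0 then (r.1, 0)
  else if 0 < r.2 ∧ r.1 + a2 * r.2 ≤ 0 then (0, r.2)
  else fillTransfer a1 a2 r

lemma overflowTransfer_spec (ha1 : a1 ∈ Set.Icc (0 : ℝ) 1) (ha2 : a2 ∈ Set.Icc (0 : ℝ) 1)
    {r w : ℝ × ℝ} (hw : 0 ≤ w) (hrw : r + transferGain a1 a2 w ≤ 0) :
    let e := overflowTransfer a1 a2 r
    0 ≤ e ∧ e ≤ w ∧ r + transferGain a1 a2 e ≤ 0 ∧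
      e.1 * (r + transferGain a1 a2 e).1 = 0 ∧ e.2 * (r + transferGain a1 a2 e).2 = 0 := by
  obtain ⟨ha1, ha1'⟩ := ha1
  obtain ⟨ha2, ha2'⟩ := ha2
  obtain ⟨r1, r2⟩ := r
  obtain ⟨w1, w2⟩ := w
  obtain ⟨hw1, hw2⟩ := Prod.mk_le_mk.1 hw
  obtain ⟨hrw1, hrw2⟩ := Prod.mk_le_mk.1 hrw
  simp only [transferGain_fst, transferGain_snd] at hrw1 hrw2
  have := mul_nonneg ha1 hw1
  have := mul_nonneg ha2 hw2
  unfold overflowTransfer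
  dsimp only
  split_ifs with h0 h1 h2
  pick_goal 4
  · simp only [Prod.le_def, Prod.fst_zero, Prod.snd_zero] at h0
    push Not at h0 h1 h2
    have hD : a1 * a2 < 1 := by
      by_contra! h
      obtain rfl : a1 = 1 := by nlinarith
      obtain rfl : a2 = 1 := by nlinarith
      rcases le_or_gt r1 0 with hr1 | hr1
      · linarith [h2 (h0 hr1)]
      · linarith [h1 hr1]
    have he := add_transferGain_fillTransfer hD (r1, r2)
    refine ⟨fillTransfer_nonneg ha2 hD h0 h1 h2,
      le_of_transferGain_le_transferGain ha1 ha2 hD ?_, he.le, ?_, ?_⟩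
    · rwa [← add_le_add_iff_left (r1, r2), he]
    all_goals rw [he]; exact mul_zero _
  all_goals
    simp only [Prod.le_def, Prod.fst_zero, Prod.snd_zero, transferGain_fst, transferGain_snd,
      Prod.fst_add, Prod.snd_add] at h0 ⊢
  · exact ⟨⟨le_rfl, le_rfl⟩, ⟨hw1, hw2⟩, ⟨by linarith, by linarith⟩, by ring, by ring⟩
  · exact ⟨⟨h1.1.le, le_rfl⟩, ⟨by linarith, hw2⟩, ⟨by linarith, by linarith⟩, by ring, by ring⟩
  · exact ⟨⟨le_rfl, h2.1.le⟩, ⟨hw1, by linarith⟩, ⟨by linarith, by linarith⟩, by ring, by ring⟩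

noncomputable def spillTransfer (a1 a2 : ℝ) (Em u : ℝ × ℝ) : ℝ × ℝ :=
  overflowTransfer a1 a2 (u + transferGain a1 a2 (deficitTransfer a1 a2 u) - Em)

noncomputable def slotLevel (a1 a2 : ℝ) (Em u : ℝ × ℝ) : ℝ × ℝ :=
  u + transferGain a1 a2 (deficitTransfer a1 a2 u + spillTransfer a1 a2 Em u)

lemma spillTransfer_spec (ha1 : a1 ∈ Set.Icc (0 : ℝ) 1) (ha2 : a2 ∈ Set.Icc (0 : ℝ) 1)
    {Em u w : ℝ × ℝ} (hw : 0 ≤ w) (hu : u + transferGain a1 a2 w ∈ Set.Icc 0 Em) :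
    0 ≤ spillTransfer a1 a2 Em u ∧ deficitTransfer a1 a2 u + spillTransfer a1 a2 Em u ≤ w ∧
      slotLevel a1 a2 Em u ∈ Set.Icc 0 Em ∧
      (spillTransfer a1 a2 Em u).1 * (Em - slotLevel a1 a2 Em u).1 = 0 ∧
      (spillTransfer a1 a2 Em u).2 * (Em - slotLevel a1 a2 Em u).2 = 0 := by
  unfold slotLevel spillTransfer
  obtain ⟨hgw, hv⟩ := deficitTransfer_le_and_add_nonneg ha1.1 ha2.1
    (mul_le_one₀ ha1.2 ha2.1 ha2.2) hw hu.1
  set g := deficitTransfer a1 a2 u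
  set v := u + transferGain a1 a2 g with hv_def
  have hr : (v - Em) + transferGain a1 a2 (w - g) ≤ 0 := by
    rw [map_sub]
    calc _ = u + transferGain a1 a2 w - Em := by rw [hv_def]; abel
      _ ≤ 0 := sub_nonpos.2 hu.2
  obtain ⟨he, hegw, hle, hc1, hc2⟩ := overflowTransfer_spec ha1 ha2 (sub_nonneg.2 hgw) hr
  set e := overflowTransfer a1 a2 (v - Em)
  have hs : u + transferGain a1 a2 (g + e) = Em + ((v - Em) + transferGain a1 a2 e) := by
    rw [map_add, hv_def]; abel
  have hEm : 0 ≤ Em := hu.1.trans hu.2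
  rw [hs, sub_add_cancel_left]
  refine ⟨he, le_sub_iff_add_le'.1 hegw, ⟨Prod.le_def.2 ⟨?_, ?_⟩, add_le_of_nonpos_right hle⟩,
    by rw [Prod.fst_neg, mul_neg, hc1, neg_zero], by rw [Prod.snd_neg, mul_neg, hc2, neg_zero]⟩
  -- a battery that spills ends full; one that does not has only gained since `0 ≤ v`
  · rcases mul_eq_zero.1 hc1 with h | h
    · simp only [Prod.fst_add, Prod.fst_sub, transferGain_fst, h, Prod.fst_zero]
      linarith [show (0 : ℝ) ≤ v.1 from hv.1, mul_nonneg ha2.1 (show (0 : ℝ) ≤ e.2 from he.2)]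
    · rw [Prod.fst_add, h, add_zero]; exact hEm.1
  · rcases mul_eq_zero.1 hc2 with h | h
    · simp only [Prod.snd_add, Prod.snd_sub, transferGain_snd, h, Prod.snd_zero]
      linarith [show (0 : ℝ) ≤ v.2 from hv.2, mul_nonneg ha1.1 (show (0 : ℝ) ≤ e.1 from he.1)]
    · rw [Prod.snd_add, h, add_zero]; exact hEm.2

section Policy

variable (a1 a2) (Em : ℝ × ℝ) (E p : ℕ → ℝ × ℝ)

/-- The battery levels before slot `i`; the `S_{k,i}` of the statement is `level … (i + 1)`. -/
def level (d : ℕ → ℝ × ℝ) (i : ℕ) : ℝ × ℝ :=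
  ∑ n ∈ range i, (E n - p n + transferGain a1 a2 (d n))

noncomputable def procLevel : ℕ → ℝ × ℝ
  | 0 => 0
  | i + 1 => slotLevel a1 a2 Em (procLevel i + E i - p i)

noncomputable def procGamma (i : ℕ) : ℝ × ℝ :=
  deficitTransfer a1 a2 (procLevel a1 a2 Em E p i + E i - p i)

noncomputable def procEps (i : ℕ) : ℝ × ℝ :=
  spillTransfer a1 a2 Em (procLevel a1 a2 Em E p i + E i - p i)

noncomputable def lag (d : ℕ → ℝ × ℝ) (i : ℕ) : ℝ × ℝ :=
  ∑ n ∈ range i, (d n - (procGamma a1 a2 Em E p n + procEps a1 a2 Em E p n))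

lemma level_succ (d : ℕ → ℝ × ℝ) (i : ℕ) :
    level a1 a2 E p d (i + 1) = level a1 a2 E p d i + (E i - p i + transferGain a1 a2 (d i)) :=
  sum_range_succ _ _

lemma level_fst (d : ℕ → ℝ × ℝ) (i : ℕ) :
    (level a1 a2 E p d i).1 = ∑ n ∈ range i, ((E n).1 - (p n).1 + a2 * (d n).2 - (d n).1) := by
  simp only [level, Prod.fst_sum, Prod.fst_add, Prod.fst_sub, transferGain_fst, add_sub_assoc]

lemma level_snd (d : ℕ → ℝ × ℝ) (i : ℕ) :
    (level a1 a2 E p d i).2 = ∑ n ∈ range i, ((E n).2 - (p n).2 + a1 * (d n).1 - (d n).2) := by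
  simp only [level, Prod.snd_sum, Prod.snd_add, Prod.snd_sub, transferGain_snd, add_sub_assoc]

lemma level_procGamma_add_procEps (i : ℕ) :
    level a1 a2 E p (procGamma a1 a2 Em E p + procEps a1 a2 Em E p) i =
      procLevel a1 a2 Em E p i := by
  induction i with
  | zero => rfl
  | succ i ih =>
    rw [level_succ, ih, procLevel, slotLevel, Pi.add_apply, procGamma, procEps]
    abel

lemma level_eq_procLevel_add (d : ℕ → ℝ × ℝ) (i : ℕ) :
    level a1 a2 E p d i =
      procLevel a1 a2 Em E p i + transferGain a1 a2 (lag a1 a2 Em E p d i) := by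
  rw [← level_procGamma_add_procEps a1 a2 Em, lag, map_sum, level, level, ← sum_add_distrib]
  refine sum_congr rfl fun n _ => ?_
  rw [map_sub, Pi.add_apply]
  abel

lemma level_succ_eq_procLevel_add (d : ℕ → ℝ × ℝ) (i : ℕ) :
    level a1 a2 E p d (i + 1) = procLevel a1 a2 Em E p i + E i - p i +
      transferGain a1 a2 (lag a1 a2 Em E p d i + d i) := by
  rw [level_succ, level_eq_procLevel_add a1 a2 Em, map_add]
  abel

variable {a1 a2 Em E p} {N : ℕ} {d : ℕ → ℝ × ℝ}

lemma lag_nonneg (ha1 : a1 ∈ Set.Icc (0 : ℝ) 1) (ha2 : a2 ∈ Set.Icc (0 : ℝ) 1)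
    (hd : ∀ i < N, 0 ≤ d i) (hfeas : ∀ i < N, level a1 a2 E p d (i + 1) ∈ Set.Icc 0 Em) :
    ∀ i ≤ N, 0 ≤ lag a1 a2 Em E p d i := by
  intro i
  induction i with
  | zero => intro _; exact le_rfl
  | succ i ih =>
    intro hi
    have hw := add_nonneg (ih (Nat.le_of_succ_le hi)) (hd i hi)
    have hu := level_succ_eq_procLevel_add a1 a2 Em E p d i ▸ hfeas i hi
    have hgew := (spillTransfer_spec ha1 ha2 hw hu).2.1
    rw [lag, sum_range_succ, ← lag]
    calc (0 : ℝ × ℝ)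
        ≤ lag a1 a2 Em E p d i + d i - (procGamma a1 a2 Em E p i + procEps a1 a2 Em E p i) :=
          sub_nonneg.2 hgew
      _ = _ := by abel

lemma procEps_spec (ha1 : a1 ∈ Set.Icc (0 : ℝ) 1) (ha2 : a2 ∈ Set.Icc (0 : ℝ) 1)
    (hd : ∀ i < N, 0 ≤ d i) (hfeas : ∀ i < N, level a1 a2 E p d (i + 1) ∈ Set.Icc 0 Em)
    {i : ℕ} (hi : i < N) :
    let s := level a1 a2 E p (procGamma a1 a2 Em E p + procEps a1 a2 Em E p) (i + 1)
    0 ≤ procEps a1 a2 Em E p i ∧ s ∈ Set.Icc 0 Em ∧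
      (procEps a1 a2 Em E p i).1 * (Em - s).1 = 0 ∧
      (procEps a1 a2 Em E p i).2 * (Em - s).2 = 0 := by
  have hw := add_nonneg (lag_nonneg ha1 ha2 hd hfeas i hi.le) (hd i hi)
  have hu := level_succ_eq_procLevel_add a1 a2 Em E p d i ▸ hfeas i hi
  obtain ⟨he, -, hs, hc1, hc2⟩ := spillTransfer_spec ha1 ha2 hw hu
  rw [level_procGamma_add_procEps]
  exact ⟨he, hs, hc1, hc2⟩

lemma procLevel_nonneg (ha1 : a1 ∈ Set.Icc (0 : ℝ) 1) (ha2 : a2 ∈ Set.Icc (0 : ℝ) 1)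
    (hd : ∀ i < N, 0 ≤ d i) (hfeas : ∀ i < N, level a1 a2 E p d (i + 1) ∈ Set.Icc 0 Em) :
    ∀ i ≤ N, 0 ≤ procLevel a1 a2 Em E p i
  | 0, _ => le_rfl
  | i + 1, hi => by
    simpa only [level_procGamma_add_procEps] using (procEps_spec ha1 ha2 hd hfeas hi).2.1.1

lemma mul_procGamma_le (ha1 : a1 ∈ Set.Icc (0 : ℝ) 1) (ha2 : a2 ∈ Set.Icc (0 : ℝ) 1)
    (hE : ∀ i < N, 0 ≤ E i) (hp : ∀ i < N, 0 ≤ p i)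
    (hd : ∀ i < N, 0 ≤ d i) (hfeas : ∀ i < N, level a1 a2 E p d (i + 1) ∈ Set.Icc 0 Em)
    {i : ℕ} (hi : i < N) :
    a2 * (procGamma a1 a2 Em E p i).2 ≤ (p i).1 ∧
      a1 * (procGamma a1 a2 Em E p i).1 ≤ (p i).2 := by
  have hs := procLevel_nonneg ha1 ha2 hd hfeas i hi.le
  have hEi := hE i hi
  have hpi := hp i hi
  simp only [Prod.le_def, Prod.fst_zero, Prod.snd_zero] at hs hEi hpi
  refine ⟨(mul_deficitTransfer_snd_le ha2.1 _).trans (max_le ?_ hpi.1),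
    (mul_deficitTransfer_fst_le ha1.1 _).trans (max_le ?_ hpi.2)⟩
  · simp only [Prod.fst_sub, Prod.fst_add]; linarith [hs.1, hEi.1]
  · simp only [Prod.snd_sub, Prod.snd_add]; linarith [hs.2, hEi.2]

end Policy

end TwoWayChannel

lemma twcPartProcThroughputs_subset (N : ℕ) (E1 E2 : ℕ → ℝ) (Em1 Em2 h1 h2 s1 s2 a1 a2 : ℝ) :
    twcPartProcThroughputs N E1 E2 Em1 Em2 h1 h2 s1 s2 a1 a2 ⊆
      twcHardThroughputs N E1 E2 Em1 Em2 h1 h2 s1 s2 a1 a2 := by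
  rintro _ ⟨p1, p2, g1, g2, e1, e2, hpos, hfeas, -, rfl⟩
  refine ⟨p1, p2, g1 + e1, g2 + e2, fun i hi => ?_, hfeas, rfl⟩
  obtain ⟨hp1, hp2, hg1, hg2, he1, he2⟩ := hpos i hi
  exact ⟨hp1, hp2, add_nonneg hg1 he1, add_nonneg hg2 he2⟩

open TwoWayChannel

theorem stmt_14
    (N : ℕ) (E1 E2 : ℕ → ℝ) (Em1 Em2 h1 h2 s1 s2 a1 a2 : ℝ)
    (ha1 : a1 ∈ Set.Icc (0:ℝ) 1) (ha2 : a2 ∈ Set.Icc (0:ℝ) 1)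
    (hE : ∀ i < N, 0 ≤ E1 i ∧ 0 ≤ E2 i) :
    (∀ p1 p2 d1 d2 : ℕ → ℝ,
      (∀ i < N, 0 ≤ p1 i ∧ 0 ≤ p2 i ∧ 0 ≤ d1 i ∧ 0 ≤ d2 i) →
      (∀ i < N,
        (0 ≤ ∑ n ∈ Finset.range (i+1), (E1 n - p1 n + a2 * d2 n - d1 n) ∧
          ∑ n ∈ Finset.range (i+1), (E1 n - p1 n + a2 * d2 n - d1 n) ≤ Em1) ∧
        (0 ≤ ∑ n ∈ Finset.range (i+1), (E2 n - p2 n + a1 * d1 n - d2 n) ∧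
          ∑ n ∈ Finset.range (i+1), (E2 n - p2 n + a1 * d1 n - d2 n) ≤ Em2)) →
      ∃ g1 g2 e1 e2 : ℕ → ℝ,
        (∀ i < N, 0 ≤ g1 i ∧ 0 ≤ g2 i ∧ 0 ≤ e1 i ∧ 0 ≤ e2 i) ∧
        -- the policy with transfers δ'ₖ = γₖ + εₖ is hard-feasible
        (∀ i < N,
          (0 ≤ ∑ n ∈ Finset.range (i+1),
                (E1 n - p1 n + a2 * (g2 n + e2 n) - (g1 n + e1 n)) ∧
            ∑ n ∈ Finset.range (i+1),
                (E1 n - p1 n + a2 * (g2 n + e2 n) - (g1 n + e1 n)) ≤ Em1) ∧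
          (0 ≤ ∑ n ∈ Finset.range (i+1),
                (E2 n - p2 n + a1 * (g1 n + e1 n) - (g2 n + e2 n)) ∧
            ∑ n ∈ Finset.range (i+1),
                (E2 n - p2 n + a1 * (g1 n + e1 n) - (g2 n + e2 n)) ≤ Em2)) ∧
        -- and partially procrastinating
        (∀ i < N,
          0 ≤ p1 i - a2 * g2 i ∧ 0 ≤ p2 i - a1 * g1 i ∧
          g1 i * g2 i = 0 ∧
          e1 i * (Em1 - ∑ n ∈ Finset.range (i+1),
            (E1 n - p1 n + a2 * (g2 n + e2 n) - (g1 n + e1 n))) = 0 ∧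
          e2 i * (Em2 - ∑ n ∈ Finset.range (i+1),
            (E2 n - p2 n + a1 * (g1 n + e1 n) - (g2 n + e2 n))) = 0)) ∧
    sSup (twcHardThroughputs N E1 E2 Em1 Em2 h1 h2 s1 s2 a1 a2)
      = sSup (twcPartProcThroughputs N E1 E2 Em1 Em2 h1 h2 s1 s2 a1 a2) := by
  refine (and_iff_left_of_imp fun hproc => ?_).2 fun p1 p2 d1 d2 hpd hfeas => ?_
  · refine congrArg sSup (Set.Subset.antisymm ?_ (twcPartProcThroughputs_subset ..))
    rintro _ ⟨p1, p2, d1, d2, hpd, hfeas, rfl⟩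
    obtain ⟨g1, g2, e1, e2, hge, hfe, hpp⟩ := hproc p1 p2 d1 d2 hpd hfeas
    exact ⟨p1, p2, g1, g2, e1, e2, fun i hi => ⟨(hpd i hi).1, (hpd i hi).2.1, hge i hi⟩,
      hfe, hpp, rfl⟩
  set E : ℕ → ℝ × ℝ := fun n => (E1 n, E2 n)
  set p : ℕ → ℝ × ℝ := fun n => (p1 n, p2 n)
  set d : ℕ → ℝ × ℝ := fun n => (d1 n, d2 n)
  set Em : ℝ × ℝ := (Em1, Em2)
  have hp : ∀ i < N, 0 ≤ p i := fun i hi => ⟨(hpd i hi).1, (hpd i hi).2.1⟩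
  have hd : ∀ i < N, 0 ≤ d i := fun i hi => ⟨(hpd i hi).2.2.1, (hpd i hi).2.2.2⟩
  have hfeas' : ∀ i < N, level a1 a2 E p d (i + 1) ∈ Set.Icc 0 Em := fun i hi => by
    simp only [Set.Icc_prod_eq, Set.mem_prod, Set.mem_Icc, level_fst, level_snd]
    exact hfeas i hi
  refine ⟨fun n => (procGamma a1 a2 Em E p n).1, fun n => (procGamma a1 a2 Em E p n).2,
    fun n => (procEps a1 a2 Em E p n).1, fun n => (procEps a1 a2 Em E p n).2,
    fun i hi => ?_, fun i hi => ?_, fun i hi => ?_⟩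
  · obtain ⟨hg1, hg2⟩ := deficitTransfer_nonneg ha1.1 ha2.1 (procLevel a1 a2 Em E p i + E i - p i)
    obtain ⟨he1, he2⟩ := (procEps_spec ha1 ha2 hd hfeas' hi).1
    exact ⟨hg1, hg2, he1, he2⟩
  · have h := (procEps_spec ha1 ha2 hd hfeas' hi).2.1
    simp only [Set.Icc_prod_eq, Set.mem_prod, Set.mem_Icc, level_fst, level_snd] at h
    exact h
  · obtain ⟨-, -, hc1, hc2⟩ := procEps_spec ha1 ha2 hd hfeas' hi
    obtain ⟨hp1, hp2⟩ := mul_procGamma_le ha1 ha2 (fun i hi => hE i hi) hp hd hfeas' hi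
    simp only [Prod.fst_sub, Prod.snd_sub, level_fst, level_snd] at hc1 hc2
    exact ⟨sub_nonneg.2 hp1, sub_nonneg.2 hp2, deficitTransfer_fst_mul_snd _, hc1, hc2⟩
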